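/- arXiv:1307.0746 — 3 statements merged into one kernel-verified Lean document; each statement's English description precedes it below -/
import Mathlib

section
/- Let N ≥ 2. For every constant C > 0, the supremum of ∫_{ℝ^N} Φ(u(x)) dx over all compactly supported Lipschitz functions u : ℝ^N → ℝ satisfying ∫_{ℝ^N} |∇u(x)|^N dx ≤ 1 and ∫_{ℝ^N} |u(x)|^N dx ≤ C is equal to +∞ (here ∇u denotes the almost-everywhere defined gradient of the Lipschitz function u). -/
/-!
Moser's functions `u(x) = a log (R / max ρ (min R |x|))` carry all of their Dirichlet energy
`ω_{N-1} a^N log (R / ρ)` in the annulus `ρ < |x| < R`. Taking `a^N ω_{N-1} log (R / ρ) = 1`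
saturates the gradient constraint and makes `u = a log (R / ρ)` on the ball of radius `ρ`, where
`α_N u^{N/(N-1)} = N log (R / ρ)`; there `Φ(u)` is of size `(R / ρ)^N`, so `∫ Φ(u) ≳ R^N`.
Meanwhile `log z ≤ N z^{1/N}` bounds `∫ |u|^N` by a multiple of `a^N R^N`. Hence
`R^N ∼ C log (R / ρ)` keeps `∫ |u|^N ≤ C` while `∫ Φ(u)` grows linearly in `log (R / ρ)`.
-/

open MeasureTheory Real

/-- `ω_{N-1}`, the `(N-1)`-dimensional measure of the unit sphere in `ℝ^N`. -/
noncomputable def sphereVol (N : ℕ) : ℝ :=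
  N * Real.pi ^ ((N : ℝ) / 2) / Real.Gamma ((N : ℝ) / 2 + 1)

/-- `α_N := N ω_{N-1}^{1/(N-1)}`. -/
noncomputable def alphaMT (N : ℕ) : ℝ := N * sphereVol N ^ ((1 : ℝ) / ((N : ℝ) - 1))

/-- `Φ(t) := e^{α_N |t|^{N/(N-1)}} - ∑_{j=0}^{N-2} α_N^j |t|^{jN/(N-1)} / j!`. -/
noncomputable def PhiMT (N : ℕ) (t : ℝ) : ℝ :=
  Real.exp (alphaMT N * |t| ^ ((N : ℝ) / ((N : ℝ) - 1))) -
    ∑ j ∈ Finset.range (N - 1),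
      alphaMT N ^ j * |t| ^ ((j : ℝ) * N / ((N : ℝ) - 1)) / (Nat.factorial j : ℝ)

section ExponentialTail

open Finset

lemma sum_range_pow_div_factorial_le (n : ℕ) {s : ℝ} (hs : 0 ≤ s) :
    ∑ j ∈ range n, s ^ j / j.factorial ≤ 2 ^ n * exp (s / 2) :=
  calc ∑ j ∈ range n, s ^ j / j.factorial
      = ∑ j ∈ range n, 2 ^ j * ((s / 2) ^ j / j.factorial) := by
        refine sum_congr rfl fun j _ => ?_
        rw [div_pow, mul_div_assoc', mul_div_cancel₀ _ (by positivity)]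
    _ ≤ ∑ j ∈ range n, 2 ^ n * ((s / 2) ^ j / j.factorial) := by
        refine sum_le_sum fun j hj => ?_
        gcongr
        · norm_num
        · exact (mem_range.mp hj).le
    _ ≤ 2 ^ n * exp (s / 2) := by
        rw [← mul_sum]
        gcongr
        exact sum_le_exp_of_nonneg (by positivity) n

lemma exp_div_two_le_exp_sub_sum_range {n : ℕ} {s : ℝ} (hs : 2 * (n + 1) ≤ s) :
    exp s / 2 ≤ exp s - ∑ j ∈ range n, s ^ j / j.factorial := by
  have h2 : (2 : ℝ) ^ (n + 1) ≤ exp (s / 2) :=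
    calc (2 : ℝ) ^ (n + 1) ≤ exp 1 ^ (n + 1) := by
          gcongr
          linarith [add_one_le_exp (1 : ℝ)]
      _ = exp (n + 1) := by rw [← exp_nat_mul]; push_cast; ring_nf
      _ ≤ exp (s / 2) := exp_le_exp.mpr (by linarith)
  have hsplit : exp s = exp (s / 2) * exp (s / 2) := by rw [← exp_add, add_halves]
  have hsum := sum_range_pow_div_factorial_le n (le_trans (by positivity) hs)
  rw [pow_succ] at h2
  nlinarith [exp_pos (s / 2)]

end ExponentialTail

section PhiMT

lemma sphereVol_nonneg (N : ℕ) : 0 ≤ sphereVol N := by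
  unfold sphereVol
  exact div_nonneg (by positivity) (Gamma_pos_of_pos (by positivity)).le

lemma alphaMT_nonneg (N : ℕ) : 0 ≤ alphaMT N := by
  unfold alphaMT
  have := sphereVol_nonneg N
  positivity

lemma PhiMT_eq_exp_sub_sum (N : ℕ) (t : ℝ) :
    PhiMT N t = exp (alphaMT N * |t| ^ ((N : ℝ) / (N - 1))) -
      ∑ j ∈ Finset.range (N - 1),
        (alphaMT N * |t| ^ ((N : ℝ) / (N - 1))) ^ j / j.factorial := by
  unfold PhiMT
  congr 1
  refine Finset.sum_congr rfl fun j _ => ?_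
  rw [mul_pow, ← rpow_natCast (|t| ^ _), ← rpow_mul (abs_nonneg t), mul_comm _ (j : ℝ),
    mul_div_assoc (j : ℝ)]

lemma PhiMT_nonneg (N : ℕ) (t : ℝ) : 0 ≤ PhiMT N t := by
  rw [PhiMT_eq_exp_sub_sum, sub_nonneg]
  have := alphaMT_nonneg N
  exact sum_le_exp_of_nonneg (by positivity) _

lemma PhiMT_zero {N : ℕ} (hN : 2 ≤ N) : PhiMT N 0 = 0 := by
  have hexp : (N : ℝ) / (N - 1) ≠ 0 := by
    have : (2 : ℝ) ≤ N := by exact_mod_cast hN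
    exact (div_pos (by linarith) (by linarith)).ne'
  obtain ⟨n, rfl⟩ : ∃ n, N = n + 2 := ⟨N - 2, by omega⟩
  rw [PhiMT_eq_exp_sub_sum, abs_zero, zero_rpow hexp, mul_zero, show n + 2 - 1 = n + 1 from rfl,
    Finset.sum_range_succ']
  simp

lemma continuous_PhiMT {N : ℕ} (hN : 1 ≤ N) : Continuous (PhiMT N) := by
  have hexp : 0 ≤ (N : ℝ) / (N - 1) := by
    have : (1 : ℝ) ≤ N := by exact_mod_cast hN
    exact div_nonneg (by linarith) (by linarith)
  have hs : Continuous fun t : ℝ => alphaMT N * |t| ^ ((N : ℝ) / (N - 1)) :=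
    continuous_const.mul (continuous_abs.rpow_const fun _ => Or.inr hexp)
  simp_rw [funext (PhiMT_eq_exp_sub_sum N)]
  exact (continuous_exp.comp hs).sub
    (continuous_finsetSum _ fun j _ => (hs.pow j).div_const _)

lemma exp_div_two_le_PhiMT {N : ℕ} (hN : 1 ≤ N) {t : ℝ}
    (ht : 2 * N ≤ alphaMT N * |t| ^ ((N : ℝ) / (N - 1))) :
    exp (alphaMT N * |t| ^ ((N : ℝ) / (N - 1))) / 2 ≤ PhiMT N t := by
  rw [PhiMT_eq_exp_sub_sum]
  refine exp_div_two_le_exp_sub_sum_range ?_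
  rwa [Nat.cast_sub hN, Nat.cast_one, sub_add_cancel]

lemma sphereVol_eq_mul_volume_ball (N : ℕ) :
    sphereVol N = N * volume.real (Metric.ball (0 : EuclideanSpace ℝ (Fin N)) 1) := by
  rcases N.eq_zero_or_pos with rfl | hN
  · simp [sphereVol]
  have : Nonempty (Fin N) := ⟨⟨0, hN⟩⟩
  have hΓ : 0 < Gamma (N / 2 + 1) := Gamma_pos_of_pos (by positivity)
  rw [measureReal_def, EuclideanSpace.volume_ball, Fintype.card_fin, ENNReal.ofReal_one, one_pow,
    one_mul, ENNReal.toReal_ofReal (by positivity), sphereVol, sqrt_eq_rpow, ← rpow_natCast,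
    ← rpow_mul pi_pos.le, mul_div_assoc]
  ring_nf

lemma alphaMT_mul_rpow_eq {N : ℕ} (hN : 2 ≤ N) {a k : ℝ} (ha : 0 ≤ a) (hk : 0 ≤ k)
    (h : sphereVol N * a ^ N * k = 1) :
    alphaMT N * (a * k) ^ ((N : ℝ) / (N - 1)) = N * k := by
  have hN1 : ((N - 1 : ℕ) : ℝ) = N - 1 := by rw [Nat.cast_sub (by omega), Nat.cast_one]
  have hpow : sphereVol N * (a * k) ^ N = k ^ (N - 1) := by
    obtain ⟨n, rfl⟩ : ∃ n, N = n + 1 := ⟨N - 1, by omega⟩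
    rw [Nat.add_sub_cancel]
    linear_combination k ^ n * h
  rw [alphaMT, div_eq_mul_one_div (N : ℝ), rpow_natCast_mul (by positivity), mul_assoc,
    ← mul_rpow (sphereVol_nonneg N) (by positivity), hpow, ← hN1, one_div,
    pow_rpow_inv_natCast hk (by omega)]

lemma exp_div_two_le_PhiMT_mul {N : ℕ} (hN : 2 ≤ N) {a k : ℝ} (ha : 0 ≤ a) (hk : 2 ≤ k)
    (h : sphereVol N * a ^ N * k = 1) :
    exp (N * k) / 2 ≤ PhiMT N (a * k) := by
  have hs : alphaMT N * |a * k| ^ ((N : ℝ) / (N - 1)) = N * k := by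
    rw [abs_of_nonneg (mul_nonneg ha (by linarith))]
    exact alphaMT_mul_rpow_eq hN ha (by linarith) h
  have h2N : 2 * (N : ℝ) ≤ N * k := by nlinarith [(N.cast_nonneg : (0 : ℝ) ≤ N)]
  have := exp_div_two_le_PhiMT (t := a * k) (by omega) (hs.symm ▸ h2N)
  rwa [hs] at this

end PhiMT

section MoserFunction

open Metric Set

noncomputable def moserProfile (a ρ R r : ℝ) : ℝ :=
  a * (log R - log (max ρ (min R r)))

noncomputable def moserFun {E : Type*} [Norm E] (a ρ R : ℝ) (x : E) : ℝ :=
  moserProfile a ρ R ‖x‖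

variable {a ρ R r : ℝ}

lemma moserProfile_of_le (hρR : ρ ≤ R) (hr : r ≤ ρ) :
    moserProfile a ρ R r = a * (log R - log ρ) := by
  rw [moserProfile, min_eq_right (hr.trans hρR), max_eq_left hr]

lemma moserProfile_of_mem (hρr : ρ ≤ r) (hrR : r ≤ R) :
    moserProfile a ρ R r = a * (log R - log r) := by
  rw [moserProfile, min_eq_right hrR, max_eq_right hρr]

lemma moserProfile_of_ge (hρR : ρ ≤ R) (hr : R ≤ r) : moserProfile a ρ R r = 0 := by
  rw [moserProfile, min_eq_left hr, max_eq_right hρR, sub_self, mul_zero]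

lemma log_sub_log_mul_exp_neg (hR : R ≠ 0) (k : ℝ) : log R - log (R * exp (-k)) = k := by
  rw [log_mul hR (exp_pos _).ne', log_exp]
  ring

lemma lipschitzWith_moserProfile (hρ : 0 < ρ) (hρR : ρ ≤ R) :
    LipschitzWith (‖a‖₊ * ρ.toNNReal⁻¹) (moserProfile a ρ R) := by
  have hlog : LipschitzOnWith ρ.toNNReal⁻¹ log (Icc ρ R) := by
    refine (convex_Icc ρ R).lipschitzOnWith_of_nnnorm_hasDerivWithin_le
      (fun y hy => (hasDerivAt_log (hρ.trans_le hy.1).ne').hasDerivWithinAt) fun y hy => ?_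
    rw [← NNReal.coe_le_coe, coe_nnnorm, NNReal.coe_inv, coe_toNNReal _ hρ.le, norm_inv,
      norm_of_nonneg (hρ.le.trans hy.1)]
    exact inv_anti₀ hρ hy.1
  have hclamp : LipschitzWith 1 fun r : ℝ => max ρ (min R r) :=
    (LipschitzWith.id.const_min R).const_max ρ
  have hlog_clamp := lipschitzOnWith_univ.mp <|
    hlog.comp hclamp.lipschitzOnWith fun r _ => ⟨le_max_left _ _, max_le hρR (min_le_left _ _)⟩
  rw [mul_one] at hlog_clamp
  refine LipschitzWith.of_dist_le_mul fun r s => ?_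
  calc dist (moserProfile a ρ R r) (moserProfile a ρ R s)
      = |a| * dist (log (max ρ (min R r))) (log (max ρ (min R s))) := by
        rw [moserProfile, moserProfile, dist_eq, dist_eq, abs_sub_comm (log _), ← abs_mul]
        ring_nf
    _ ≤ |a| * (ρ.toNNReal⁻¹ * dist r s) := by gcongr; exact hlog_clamp.dist_le_mul r s
    _ = _ := by rw [NNReal.coe_mul, coe_nnnorm, norm_eq_abs]; ring

variable {E : Type*} [NormedAddCommGroup E]

lemma exists_lipschitzWith_moserFun (hρ : 0 < ρ) (hρR : ρ ≤ R) :
    ∃ K, LipschitzWith K (moserFun a ρ R : E → ℝ) :=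
  ⟨_, (lipschitzWith_moserProfile hρ hρR).comp lipschitzWith_one_norm⟩

lemma continuous_moserFun (hρ : 0 < ρ) (hρR : ρ ≤ R) : Continuous (moserFun a ρ R : E → ℝ) :=
  ((lipschitzWith_moserProfile hρ hρR).comp lipschitzWith_one_norm).continuous

lemma hasCompactSupport_moserFun [ProperSpace E] (hρR : ρ ≤ R) :
    HasCompactSupport (moserFun a ρ R : E → ℝ) :=
  HasCompactSupport.intro (isCompact_closedBall 0 R) fun x hx =>
    moserProfile_of_ge hρR (by simpa using hx : R < ‖x‖).le

variable [NormedSpace ℝ E] {x : E}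

lemma fderiv_moserFun_of_norm_lt (hρR : ρ ≤ R) (hx : ‖x‖ < ρ) :
    fderiv ℝ (moserFun a ρ R) x = 0 := by
  have : moserFun a ρ R =ᶠ[nhds x] fun _ => a * (log R - log ρ) := by
    filter_upwards [isOpen_ball.mem_nhds (mem_ball_zero_iff.mpr hx)] with y hy
    exact moserProfile_of_le hρR (mem_ball_zero_iff.mp hy).le
  rw [this.fderiv_eq, fderiv_const_apply]

lemma fderiv_moserFun_of_lt_norm (hρR : ρ ≤ R) (hx : R < ‖x‖) :
    fderiv ℝ (moserFun a ρ R) x = 0 := by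
  have : moserFun a ρ R =ᶠ[nhds x] fun _ => 0 := by
    filter_upwards [(isOpen_lt continuous_const continuous_norm).mem_nhds hx] with y hy
    exact moserProfile_of_ge hρR (le_of_lt hy)
  rw [this.fderiv_eq, fderiv_const_apply]

end MoserFunction

section MoserFunctionInner

open Metric Set

variable {E : Type*} [NormedAddCommGroup E] [InnerProductSpace ℝ E] {a ρ R : ℝ} {x : E}

lemma norm_fderiv_moserFun_of_mem (ha : 0 ≤ a) (hρ : 0 < ρ) (hρx : ρ < ‖x‖) (hxR : ‖x‖ < R) :
    ‖fderiv ℝ (moserFun a ρ R) x‖ = a / ‖x‖ := by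
  have hx : ‖x‖ ^ 2 ≠ 0 := by positivity [hρ.trans hρx]
  -- `log ‖y‖ = log (‖y‖ ^ 2) / 2` avoids differentiating the norm itself
  have hderiv : HasFDerivAt (fun y : E => a * log R - a / 2 * log (‖y‖ ^ 2))
      (-((a / 2) • (‖x‖ ^ 2)⁻¹ • (2 : ℝ) • innerSL ℝ x)) x := by
    have := ((hasStrictFDerivAt_norm_sq x).hasFDerivAt.log hx).const_mul (a / 2)
    simpa [two_smul] using this.const_sub (a * log R)
  have hlocal : moserFun a ρ R =ᶠ[nhds x] fun y : E => a * log R - a / 2 * log (‖y‖ ^ 2) := by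
    filter_upwards [((isOpen_lt continuous_const continuous_norm).inter
      (isOpen_lt continuous_norm continuous_const)).mem_nhds ⟨hρx, hxR⟩] with y hy
    rw [moserFun, moserProfile_of_mem hy.1.le hy.2.le, log_pow]
    ring
  rw [hlocal.fderiv_eq, hderiv.fderiv, norm_neg, norm_smul, norm_smul, norm_smul,
    innerSL_apply_norm, norm_inv, norm_pow, norm_norm, norm_of_nonneg (by positivity : 0 ≤ a / 2),
    Real.norm_two]
  field_simp

end MoserFunctionInner

section MoserIntegrals

open Metric Set Module

variable {a ρ R : ℝ}

lemma abs_moserProfile_pow_le {n : ℕ} (hn : n ≠ 0) (hρ : 0 < ρ) (hρR : ρ ≤ R) {y : ℝ}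
    (hy : 0 < y) (hyR : y ≤ R) :
    |moserProfile a ρ R y| ^ n ≤ |a| ^ n * n ^ n * (R / y) := by
  set c := max ρ (min R y)
  have hc : 0 < c := hρ.trans_le (le_max_left _ _)
  have hcR : c ≤ R := max_le hρR (min_le_left _ _)
  have hyc : y ≤ c := (min_eq_right hyR).symm.le.trans (le_max_right _ _)
  have hRc : 1 ≤ R / c := (one_le_div hc).mpr hcR
  have hn' : (0 : ℝ) < (n : ℝ)⁻¹ := by positivity
  -- `log z ≤ n z ^ (1 / n)` turns the logarithmic singularity into the integrable `R / y`
  have hlog : log (R / c) ^ n ≤ n ^ n * (R / c) :=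
    calc log (R / c) ^ n ≤ ((R / c) ^ (n : ℝ)⁻¹ / (n : ℝ)⁻¹) ^ n :=
          pow_le_pow_left₀ (log_nonneg hRc) (log_le_rpow_div (by positivity) hn') n
      _ = n ^ n * (R / c) := by
          rw [div_pow, rpow_inv_natCast_pow (by positivity) hn, inv_pow, div_inv_eq_mul, mul_comm]
  have hprofile : moserProfile a ρ R y = a * log (R / c) := by
    rw [moserProfile, log_div (hc.trans_le hcR).ne' hc.ne']
  calc |moserProfile a ρ R y| ^ n = |a| ^ n * log (R / c) ^ n := by
        rw [hprofile, abs_mul, mul_pow, abs_of_nonneg (log_nonneg hRc)]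
    _ ≤ |a| ^ n * (n ^ n * (R / c)) := by gcongr
    _ ≤ |a| ^ n * n ^ n * (R / y) := by
        rw [← mul_assoc]
        gcongr
        exact hc.le.trans hcR

variable {E : Type*} [NormedAddCommGroup E] [NormedSpace ℝ E] [FiniteDimensional ℝ E]
  [MeasurableSpace E] [BorelSpace E] (μ : Measure E) [μ.IsAddHaarMeasure]

lemma measureReal_closedBall_mul_le_integral_comp_moserFun {g : ℝ → ℝ} (hg : Continuous g)
    (hg0 : g 0 = 0) (hg_nonneg : ∀ t, 0 ≤ g t) (hρ : 0 < ρ) (hρR : ρ ≤ R) :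
    μ.real (closedBall 0 ρ) * g (a * (log R - log ρ)) ≤ ∫ x, g (moserFun a ρ R x) ∂μ := by
  have hint : Integrable (fun x => g (moserFun a ρ R x)) μ :=
    (hg.comp (continuous_moserFun hρ hρR)).integrable_of_hasCompactSupport
      ((hasCompactSupport_moserFun hρR).comp_left hg0)
  calc μ.real (closedBall 0 ρ) * g (a * (log R - log ρ))
      = ∫ x in closedBall 0 ρ, g (moserFun a ρ R x) ∂μ := by
        rw [setIntegral_congr_fun measurableSet_closedBall fun x hx => by
          rw [moserFun, moserProfile_of_le hρR (mem_closedBall_zero_iff.mp hx)],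
          setIntegral_const, smul_eq_mul]
    _ ≤ ∫ x, g (moserFun a ρ R x) ∂μ :=
        setIntegral_le_integral hint (ae_of_all _ fun x => hg_nonneg _)

lemma measureReal_ball_mul_pow_div_two_le_integral_PhiMT_moserFun {N : ℕ} (hN : 2 ≤ N)
    (hdim : finrank ℝ E = N) {k : ℝ} (ha : 0 ≤ a) (hR : 0 < R) (hk : 2 ≤ k)
    (h : sphereVol N * a ^ N * k = 1) :
    μ.real (ball 0 1) * R ^ N / 2 ≤ ∫ x, PhiMT N (moserFun a (R * exp (-k)) R x) ∂μ := by
  have hρ : 0 < R * exp (-k) := by positivity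
  have hρR : R * exp (-k) ≤ R := mul_le_of_le_one_right hR.le (exp_le_one_iff.mpr (by linarith))
  have hρN : (R * exp (-k)) ^ N * exp (N * k) = R ^ N := by
    rw [mul_pow, ← exp_nat_mul, mul_assoc, ← exp_add]
    simp
  have hball := measureReal_closedBall_mul_le_integral_comp_moserFun μ
    (continuous_PhiMT (by omega)) (PhiMT_zero hN) (PhiMT_nonneg N) hρ hρR (a := a)
  rw [μ.addHaar_real_closedBall 0 hρ.le, hdim, log_sub_log_mul_exp_neg hR.ne'] at hball
  calc μ.real (ball 0 1) * R ^ N / 2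
      = (R * exp (-k)) ^ N * μ.real (ball 0 1) * (exp (N * k) / 2) := by rw [← hρN]; ring
    _ ≤ (R * exp (-k)) ^ N * μ.real (ball 0 1) * PhiMT N (a * k) := by
        gcongr
        exact exp_div_two_le_PhiMT_mul hN ha hk h
    _ ≤ _ := hball

lemma integral_abs_moserFun_pow_le (hd : 2 ≤ finrank ℝ E) (hρ : 0 < ρ) (hρR : ρ ≤ R) :
    ∫ x, |moserFun a ρ R x| ^ finrank ℝ E ∂μ ≤
      finrank ℝ E * μ.real (ball 0 1) * |a| ^ finrank ℝ E * (finrank ℝ E : ℝ) ^ finrank ℝ E *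
        R ^ finrank ℝ E / (finrank ℝ E - 1) := by
  have : Nontrivial E := Module.nontrivial_of_finrank_pos (R := ℝ) (by omega)
  obtain ⟨m, hm⟩ : ∃ m, finrank ℝ E = m + 2 := ⟨finrank ℝ E - 2, by omega⟩
  have hR : 0 < R := hρ.trans_le hρR
  set f : ℝ → ℝ := fun r => |moserProfile a ρ R r| ^ (m + 2)
  have hsupp : ∫ y in Ioi (0 : ℝ), y ^ (m + 1) • f y = ∫ y in Ioc 0 R, y ^ (m + 1) • f y := by
    refine setIntegral_eq_of_subset_of_forall_sdiff_eq_zero measurableSet_Ioi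
      Ioc_subset_Ioi_self fun y hy => ?_
    have hRy : R ≤ y := le_of_not_ge fun h => hy.2 ⟨hy.1, h⟩
    simp [f, moserProfile_of_ge hρR hRy]
  have hbound : ∫ y in Ioc 0 R, y ^ (m + 1) • f y ≤
      ∫ y in Ioc 0 R, |a| ^ (m + 2) * ((m + 2 : ℕ) : ℝ) ^ (m + 2) * R * y ^ m := by
    refine setIntegral_mono_on
      ((continuous_pow _).smul ((lipschitzWith_moserProfile hρ hρR).continuous.abs.pow _)
        |>.integrableOn_Ioc)
      (continuous_const.mul (continuous_pow _)).integrableOn_Ioc measurableSet_Ioc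
      fun y hy => ?_
    calc y ^ (m + 1) • f y
        ≤ y ^ (m + 1) * (|a| ^ (m + 2) * ((m + 2 : ℕ) : ℝ) ^ (m + 2) * (R / y)) :=
          mul_le_mul_of_nonneg_left (abs_moserProfile_pow_le (by omega) hρ hρR hy.1 hy.2)
            (by positivity [hy.1])
      _ = |a| ^ (m + 2) * ((m + 2 : ℕ) : ℝ) ^ (m + 2) * R * y ^ m := by
          field_simp [hy.1.ne']
          ring
  have hpoly : ∫ y in Ioc 0 R, y ^ m = R ^ (m + 1) / (m + 1) := by
    rw [← intervalIntegral.integral_of_le hR.le, integral_pow, zero_pow m.succ_ne_zero, sub_zero]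
  rw [show (fun x => |moserFun a ρ R x| ^ finrank ℝ E) = fun x => f ‖x‖ by rw [hm]; rfl,
    integral_fun_norm_addHaar, hm, show m + 2 - 1 = m + 1 from rfl, hsupp, nsmul_eq_mul,
    smul_eq_mul]
  calc ((m + 2 : ℕ) : ℝ) * (μ.real (ball 0 1) * ∫ y in Ioc 0 R, y ^ (m + 1) • f y)
      ≤ ((m + 2 : ℕ) : ℝ) * (μ.real (ball 0 1) *
          ∫ y in Ioc 0 R, |a| ^ (m + 2) * ((m + 2 : ℕ) : ℝ) ^ (m + 2) * R * y ^ m) := by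
        gcongr
    _ = _ := by
        rw [integral_const_mul, hpoly]
        push_cast
        rw [show (m : ℝ) + 2 - 1 = m + 1 by ring]
        field_simp
        ring

end MoserIntegrals

section MoserGradient

open Metric Set Module

variable {E : Type*} [NormedAddCommGroup E] [InnerProductSpace ℝ E] {a ρ R : ℝ}

lemma norm_fderiv_moserFun_pow_eq_indicator {n : ℕ} (hn : n ≠ 0) (ha : 0 ≤ a) (hρ : 0 < ρ)
    (hρR : ρ ≤ R) {x : E} (hxρ : ‖x‖ ≠ ρ) (hxR : ‖x‖ ≠ R) :
    ‖fderiv ℝ (moserFun a ρ R) x‖ ^ n = (Ioo ρ R).indicator (fun r => (a / r) ^ n) ‖x‖ := by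
  rcases hxρ.lt_or_gt with hlt | hgt
  · rw [fderiv_moserFun_of_norm_lt hρR hlt, norm_zero, zero_pow hn,
      indicator_of_notMem fun h => hlt.not_gt h.1]
  rcases hxR.lt_or_gt with hlt' | hgt'
  · rw [norm_fderiv_moserFun_of_mem ha hρ hgt hlt', indicator_of_mem (mem_Ioo.mpr ⟨hgt, hlt'⟩)]
  · rw [fderiv_moserFun_of_lt_norm hρR hgt', norm_zero, zero_pow hn,
      indicator_of_notMem fun h => hgt'.not_gt h.2]

variable [FiniteDimensional ℝ E] [Nontrivial E] [MeasurableSpace E] [BorelSpace E]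
  (μ : Measure E) [μ.IsAddHaarMeasure]

lemma integral_norm_fderiv_moserFun_pow (ha : 0 ≤ a) (hρ : 0 < ρ) (hρR : ρ ≤ R) :
    ∫ x, ‖fderiv ℝ (moserFun a ρ R) x‖ ^ finrank ℝ E ∂μ =
      finrank ℝ E * μ.real (ball 0 1) * a ^ finrank ℝ E * (log R - log ρ) := by
  set d := finrank ℝ E
  have hd : d ≠ 0 := finrank_pos.ne'
  have hR : 0 < R := hρ.trans_le hρR
  have hspheres : μ (sphere 0 ρ ∪ sphere 0 R) = 0 := measure_union_null
    (μ.addHaar_sphere_of_ne_zero 0 hρ.ne') (μ.addHaar_sphere_of_ne_zero 0 hR.ne')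
  have hae : (fun x => ‖fderiv ℝ (moserFun a ρ R) x‖ ^ d)
      =ᵐ[μ] fun x => (Ioo ρ R).indicator (fun r => (a / r) ^ d) ‖x‖ := by
    filter_upwards [measure_eq_zero_iff_ae_notMem.mp hspheres] with x hx
    simp only [mem_union, mem_sphere_zero_iff_norm, not_or] at hx
    exact norm_fderiv_moserFun_pow_eq_indicator hd ha hρ hρR hx.1 hx.2
  have hradial : ∀ y ∈ Ioi (0 : ℝ), y ^ (d - 1) • (Ioo ρ R).indicator (fun r => (a / r) ^ d) y
      = (Ioo ρ R).indicator (fun r => a ^ d * r⁻¹) y := by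
    intro y hy
    by_cases hyI : y ∈ Ioo ρ R
    · rw [indicator_of_mem hyI, indicator_of_mem hyI, smul_eq_mul, div_pow,
        ← pow_sub_one_mul hd y]
      field_simp [(mem_Ioi.mp hy).ne']
    · rw [indicator_of_notMem hyI, indicator_of_notMem hyI, smul_zero]
  have hIoo : Ioo ρ R ⊆ Ioi 0 := Ioo_subset_Ioi_self.trans (Ioi_subset_Ioi hρ.le)
  rw [integral_congr_ae hae, integral_fun_norm_addHaar,
    setIntegral_congr_fun measurableSet_Ioi hradial, setIntegral_indicator measurableSet_Ioo,
    inter_eq_self_of_subset_right hIoo, integral_const_mul, ← integral_Ioc_eq_integral_Ioo,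
    ← intervalIntegral.integral_of_le hρR, integral_inv_of_pos hρ hR, log_div hR.ne' hρ.ne',
    nsmul_eq_mul, smul_eq_mul]
  ring

end MoserGradient

open Metric Module in
lemma exists_pos_forall_exists_admissible_mul_le_integral_PhiMT {N : ℕ} (hN : 2 ≤ N)
    {E : Type*} [NormedAddCommGroup E] [InnerProductSpace ℝ E] [FiniteDimensional ℝ E]
    [MeasurableSpace E] [BorelSpace E] (μ : Measure E) [μ.IsAddHaarMeasure]
    (hdim : finrank ℝ E = N) (hμ : sphereVol N = N * μ.real (ball 0 1)) {C : ℝ} (hC : 0 < C) :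
    ∃ c > 0, ∀ k ≥ 2, ∃ u : E → ℝ,
      (∃ K : NNReal, LipschitzWith K u) ∧ HasCompactSupport u ∧
      (∫ x, ‖fderiv ℝ u x‖ ^ N ∂μ) ≤ 1 ∧ (∫ x, |u x| ^ N ∂μ) ≤ C ∧
      c * k ≤ ∫ x, PhiMT N (u x) ∂μ := by
  have : Nontrivial E := Module.nontrivial_of_finrank_pos (R := ℝ) (by omega)
  have hV : 0 < μ.real (ball 0 1) :=
    ENNReal.toReal_pos (measure_ball_pos μ 0 one_pos).ne' measure_ball_lt_top.ne
  have hN1 : (1 : ℝ) < N := by exact_mod_cast hN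
  refine ⟨μ.real (ball 0 1) * (N - 1) * C / (2 * N ^ N), by positivity [sub_pos.mpr hN1],
    fun k hk => ?_⟩
  have hk0 : 0 < k := by linarith
  obtain ⟨a, ha, haN⟩ : ∃ a : ℝ, 0 < a ∧ a ^ N = (N * μ.real (ball 0 1) * k)⁻¹ :=
    ⟨_, by positivity, rpow_inv_natCast_pow (by positivity) (by omega)⟩
  obtain ⟨R, hR, hRN⟩ : ∃ R : ℝ, 0 < R ∧ R ^ N = (N - 1) * C * k / N ^ N :=
    ⟨_, by positivity [sub_pos.mpr hN1],
      rpow_inv_natCast_pow (by positivity [sub_pos.mpr hN1]) (by omega)⟩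
  have hρ : 0 < R * exp (-k) := by positivity
  have hρR : R * exp (-k) ≤ R := mul_le_of_le_one_right hR.le (exp_le_one_iff.mpr (by linarith))
  refine ⟨moserFun a (R * exp (-k)) R, exists_lipschitzWith_moserFun hρ hρR,
    hasCompactSupport_moserFun hρR, ?_, ?_, ?_⟩
  · rw [← hdim, integral_norm_fderiv_moserFun_pow μ ha.le hρ hρR, hdim,
      log_sub_log_mul_exp_neg hR.ne', haN]
    refine le_of_eq ?_
    field_simp
  · refine (hdim ▸ integral_abs_moserFun_pow_le μ (hdim ▸ hN) hρ hρR).trans_eq ?_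
    rw [abs_of_pos ha, haN, hRN]
    field_simp [(sub_pos.mpr hN1).ne']
  · refine le_of_eq_of_le ?_ (measureReal_ball_mul_pow_div_two_le_integral_PhiMT_moserFun μ hN
      hdim ha.le hR hk (by rw [hμ, haN]; field_simp))
    rw [hRN]
    field_simp

/-- For any `C > 0`, the supremum of `∫_{ℝ^N} Φ(u)` over compactly supported Lipschitz
functions `u : ℝ^N → ℝ` with `∫ |∇u|^N ≤ 1` and `∫ |u|^N ≤ C` is `+∞` (i.e. the set of
attained values is not bounded above). Here `∇u` is the a.e. defined gradient (`fderiv`). -/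
theorem moser_trudinger_unbounded_with_LN_constraint (N : ℕ) (hN : 2 ≤ N)
    (C : ℝ) (hC : 0 < C) :
    ¬ BddAbove {r : ℝ | ∃ u : EuclideanSpace ℝ (Fin N) → ℝ,
        (∃ K : NNReal, LipschitzWith K u) ∧ HasCompactSupport u ∧
        (∫ x, ‖fderiv ℝ u x‖ ^ N) ≤ 1 ∧ (∫ x, |u x| ^ N) ≤ C ∧
        r = ∫ x, PhiMT N (u x)} := by
  obtain ⟨c, hc, hmoser⟩ := exists_pos_forall_exists_admissible_mul_le_integral_PhiMT hN volume
    finrank_euclideanSpace_fin (sphereVol_eq_mul_volume_ball N) hC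
  rw [not_bddAbove_iff]
  intro b
  obtain ⟨u, hLip, hsupp, hgrad, hLN, hval⟩ := hmoser _ (le_max_left 2 ((b + 1) / c))
  refine ⟨_, ⟨u, hLip, hsupp, hgrad, hLN, rfl⟩, ?_⟩
  have := (div_le_iff₀ hc).mp (le_max_right 2 ((b + 1) / c))
  linarith
end

section
/- Let N ≥ 2, let B ⊂ ℝ^N be the open unit ball, and let ρ : B → (0,∞) be continuous. Set ζ(x) := (1 − |x|²)² ρ(x) / 4, and suppose there exists a boundary point x̃ with |x̃| = 1 such that ζ(x) → +∞ as x → x̃ (x ∈ B), i.e. for every M > 0 there is δ > 0 such that ζ(x) ≥ M whenever x ∈ B and |x − x̃| < δ. Then inf { ∫_B |∇u(x)|^N dx / ∫_B |u(x)|^N ρ(x)^{N/2} dx : u ∈ C_c^∞(B), u ≢ 0 } = 0, i.e. the first Poincaré constant λ₁(B, g_ρ) of the conformal metric g_ρ = ρ g_e vanishes. -/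
/-!
The `N`-Dirichlet energy `∫ ‖Du‖ ^ N` in dimension `N` is invariant under the dilations
`u ↦ u((x - c) / r)`, while `∫ |u| ^ N ρ ^ (N / 2)` over a ball of radius `r` on which `ρ ≥ m`
is at least `m ^ (N / 2) r ^ N` times the corresponding integral of the undilated `u`. Place a
fixed bump, dilated by `r`, on the ball of radius `r` centred at `(1 - 3r) x̃`: there
`1 - ‖x‖² ≤ 8r`, so `ζ ≥ M` forces `ρ ≥ M / (16 r²)` and the factor `r ^ N` cancels, leaving a
Rayleigh quotient at most `C / (M / 16) ^ (N / 2)` with `C` depending only on the bump.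
Letting `M → ∞` drives the quotients to `0`.
-/

open MeasureTheory Real

noncomputable def unitBall (N : ℕ) : Set (EuclideanSpace ℝ (Fin N)) := Metric.ball 0 1

/-- `u ∈ C_c^∞(Ω)`. -/
def IsTest {N : ℕ} (Ω : Set (EuclideanSpace ℝ (Fin N)))
    (u : EuclideanSpace ℝ (Fin N) → ℝ) : Prop :=
  ContDiff ℝ (⊤ : ℕ∞) u ∧ HasCompactSupport u ∧ tsupport u ⊆ Ω

open Metric Module Filter Topology

section Rescaling

variable {E F : Type*} [NormedAddCommGroup E] [NormedSpace ℝ E] [NormedAddCommGroup F]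
  [NormedSpace ℝ F]

theorem fderiv_comp_smul_sub (f : E → F) (a : ℝ) (c x : E) :
    fderiv ℝ (fun y ↦ f (a • (y - c))) x = a • fderiv ℝ f (a • (x - c)) :=
  (fderiv_comp_sub (f := fun y ↦ f (a • y)) c).trans (fderiv_comp_smul a)

variable [FiniteDimensional ℝ E] [MeasurableSpace E] [BorelSpace E] (μ : Measure E)
  [μ.IsAddHaarMeasure]

theorem integral_comp_inv_smul_sub (f : E → F) (c : E) {r : ℝ} (hr : 0 ≤ r) :
    ∫ x, f (r⁻¹ • (x - c)) ∂μ = r ^ finrank ℝ E • ∫ x, f x ∂μ := by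
  rw [integral_sub_right_eq_self (fun y ↦ f (r⁻¹ • y)) c,
    Measure.integral_comp_inv_smul_of_nonneg μ f hr]

theorem integral_norm_fderiv_pow_comp_inv_smul_sub (f : E → F) (c : E) {r : ℝ} (hr : 0 < r) :
    ∫ x, ‖fderiv ℝ (fun y ↦ f (r⁻¹ • (y - c))) x‖ ^ finrank ℝ E ∂μ =
      ∫ x, ‖fderiv ℝ f x‖ ^ finrank ℝ E ∂μ := by
  simp_rw [fderiv_comp_smul_sub, norm_smul, mul_pow, norm_inv, norm_of_nonneg hr.le]
  rw [integral_const_mul,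
    integral_comp_inv_smul_sub μ (fun y ↦ ‖fderiv ℝ f y‖ ^ finrank ℝ E) c hr.le, smul_eq_mul,
    ← mul_assoc, ← mul_pow, inv_mul_cancel₀ hr.ne', one_pow, one_mul]

end Rescaling

namespace ContDiffBump

variable {E : Type*} [NormedAddCommGroup E] [NormedSpace ℝ E] [HasContDiffBump E]

def rescale (φ : ContDiffBump (0 : E)) (c : E) {r : ℝ} (hr : 0 < r) : ContDiffBump c :=
  ⟨r * φ.rIn, r * φ.rOut, mul_pos hr φ.rIn_pos, mul_lt_mul_of_pos_left φ.rIn_lt_rOut hr⟩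

theorem rescale_apply (φ : ContDiffBump (0 : E)) (c : E) {r : ℝ} (hr : 0 < r) (x : E) :
    φ.rescale c hr x = φ (r⁻¹ • (x - c)) := by
  simp only [ContDiffBump.apply, rescale, mul_div_mul_left _ _ hr.ne', mul_inv_rev, mul_smul,
    sub_zero]

theorem coe_ne_zero {c : E} (f : ContDiffBump c) : (f : E → ℝ) ≠ 0 := fun h ↦ by
  simpa [h] using f.one_of_mem_closedBall (mem_closedBall_self f.rIn_pos.le)

theorem abs_pow_eq_zero_of_notMem_closedBall {c x : E} (f : ContDiffBump c) {n : ℕ} (hn : n ≠ 0)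
    (hx : x ∉ closedBall c f.rOut) : |f x| ^ n = 0 := by
  rw [f.zero_of_le_dist (not_le.mp (mt mem_closedBall.mpr hx)).le, abs_zero, zero_pow hn]

variable [FiniteDimensional ℝ E] [MeasurableSpace E] [BorelSpace E]

theorem integral_abs_pow_pos {c : E} (f : ContDiffBump c) (μ : Measure E) [μ.IsAddHaarMeasure]
    {n : ℕ} (hn : n ≠ 0) : 0 < ∫ x, |f x| ^ n ∂μ := by
  have hsupp : Function.support (fun x ↦ |f x| ^ n) = ball c f.rOut := by
    rw [← f.support_eq]
    ext x
    simp [hn]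
  have hint : Integrable (fun x ↦ |f x| ^ n) μ :=
    (f.continuous.abs.pow n).integrable_of_hasCompactSupport
      (f.hasCompactSupport.comp_left (g := fun y : ℝ ↦ |y| ^ n) (by simp [hn]))
  rw [integral_pos_iff_support_of_nonneg (fun x ↦ by positivity) hint, hsupp]
  exact measure_ball_pos μ c f.rOut_pos

theorem rpow_mul_integral_abs_pow_le_setIntegral {c : E} (f : ContDiffBump c) (μ : Measure E)
    [IsFiniteMeasureOnCompacts μ] {Ω : Set E} (hΩ : MeasurableSet Ω)
    (hK : closedBall c f.rOut ⊆ Ω) {ρ : E → ℝ} (hρc : ContinuousOn ρ (closedBall c f.rOut))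
    {m p : ℝ} (hm : 0 ≤ m) (hp : 0 ≤ p) (hρm : ∀ x ∈ closedBall c f.rOut, m ≤ ρ x)
    {n : ℕ} (hn : n ≠ 0) :
    m ^ p * ∫ x, |f x| ^ n ∂μ ≤ ∫ x in Ω, |f x| ^ n * ρ x ^ p ∂μ := by
  have hzero : ∀ x ∉ closedBall c f.rOut, |f x| ^ n * ρ x ^ p = 0 := fun x hx ↦ by
    rw [f.abs_pow_eq_zero_of_notMem_closedBall hn hx, zero_mul]
  have hpow : ContinuousOn (fun x ↦ |f x| ^ n) (closedBall c f.rOut) :=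
    (f.continuous.abs.pow n).continuousOn
  calc m ^ p * ∫ x, |f x| ^ n ∂μ
      = ∫ x in closedBall c f.rOut, |f x| ^ n * m ^ p ∂μ := by
        rw [mul_comm, ← integral_mul_const, setIntegral_eq_integral_of_forall_compl_eq_zero
          fun x hx ↦ by rw [f.abs_pow_eq_zero_of_notMem_closedBall hn hx, zero_mul]]
    _ ≤ ∫ x in closedBall c f.rOut, |f x| ^ n * ρ x ^ p ∂μ :=
        setIntegral_mono_on ((hpow.mul continuousOn_const).integrableOn_compact
          (isCompact_closedBall c _)) ((hpow.mul (hρc.rpow_const fun _ _ ↦ Or.inr hp))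
          |>.integrableOn_compact (isCompact_closedBall c _)) measurableSet_closedBall
          fun x hx ↦ mul_le_mul_of_nonneg_left (rpow_le_rpow hm (hρm x hx) hp) (by positivity)
    _ = ∫ x in Ω, |f x| ^ n * ρ x ^ p ∂μ :=
        (setIntegral_eq_of_subset_of_forall_sdiff_eq_zero hΩ hK fun x hx ↦ hzero x hx.2).symm

end ContDiffBump

theorem ContDiffBump.isTest {N : ℕ} {c : EuclideanSpace ℝ (Fin N)} (f : ContDiffBump c)
    {Ω : Set (EuclideanSpace ℝ (Fin N))} (h : closedBall c f.rOut ⊆ Ω) : IsTest Ω f :=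
  ⟨f.contDiff, f.hasCompactSupport, f.tsupport_eq ▸ h⟩

theorem one_sub_sq_norm_le {E : Type*} [SeminormedAddCommGroup E] {xb x : E} (hxb : ‖xb‖ = 1)
    (hx : ‖x‖ ≤ 1) : 1 - ‖x‖ ^ 2 ≤ 2 * ‖x - xb‖ := by
  have h := norm_sub_norm_le xb x
  rw [hxb, norm_sub_rev] at h
  nlinarith [norm_nonneg x]

section Geometry

variable {E : Type*} [NormedAddCommGroup E] [NormedSpace ℝ E] {xb : E}

theorem closedBall_smul_subset_ball_zero_one (hxb : ‖xb‖ = 1) {r : ℝ} (hr0 : 0 < r)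
    (hr : r ≤ 1 / 3) : closedBall ((1 - 3 * r) • xb) r ⊆ ball 0 1 :=
  closedBall_subset_ball' <| by
    rw [dist_zero_right, norm_smul, hxb, mul_one, norm_of_nonneg (by linarith)]
    linarith

theorem closedBall_smul_subset_closedBall (hxb : ‖xb‖ = 1) {r : ℝ} (hr : 0 ≤ r) :
    closedBall ((1 - 3 * r) • xb) r ⊆ closedBall xb (4 * r) :=
  closedBall_subset_closedBall' <| by
    rw [dist_eq_norm, show (1 - 3 * r) • xb - xb = (-(3 * r)) • xb by module, norm_smul, hxb,
      mul_one, norm_neg, norm_of_nonneg (by linarith)]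
    linarith

end Geometry

theorem EuclideanSpace.pos_of_norm_eq_one {N : ℕ} {x : EuclideanSpace ℝ (Fin N)}
    (hx : ‖x‖ = 1) : 0 < N := by
  rcases N with _ | N
  · simp [Subsingleton.elim x 0] at hx
  · exact N.succ_pos

section RayleighQuotient

variable {N : ℕ} {Ω : Set (EuclideanSpace ℝ (Fin N))} {ρ : EuclideanSpace ℝ (Fin N) → ℝ}

/-- The quotient whose infimum over nonzero `u ∈ C_c^∞(Ω)` is `λ₁(Ω, g_ρ)`. -/
noncomputable def rayleighQuotient (Ω : Set (EuclideanSpace ℝ (Fin N)))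
    (ρ u : EuclideanSpace ℝ (Fin N) → ℝ) : ℝ :=
  (∫ x in Ω, ‖fderiv ℝ u x‖ ^ N) / ∫ x in Ω, |u x| ^ N * ρ x ^ ((N : ℝ) / 2)

theorem rayleighQuotient_nonneg (hΩ : MeasurableSet Ω) (hρ : ∀ x ∈ Ω, 0 ≤ ρ x)
    (u : EuclideanSpace ℝ (Fin N) → ℝ) : 0 ≤ rayleighQuotient Ω ρ u :=
  div_nonneg (integral_nonneg fun _ ↦ by positivity)
    (setIntegral_nonneg hΩ fun x hx ↦ mul_nonneg (by positivity) (rpow_nonneg (hρ x hx) _))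

theorem rayleighQuotient_rescale_le (hN : N ≠ 0) (hΩ : MeasurableSet Ω)
    (φ : ContDiffBump (0 : EuclideanSpace ℝ (Fin N))) {c : EuclideanSpace ℝ (Fin N)} {r m : ℝ}
    (hr : 0 < r) (hm : 0 < m) (hK : closedBall c (r * φ.rOut) ⊆ Ω)
    (hρc : ContinuousOn ρ (closedBall c (r * φ.rOut)))
    (hρm : ∀ x ∈ closedBall c (r * φ.rOut), m ≤ ρ x) :
    rayleighQuotient Ω ρ (φ.rescale c hr) ≤
      (∫ x, ‖fderiv ℝ φ x‖ ^ N) / (m ^ ((N : ℝ) / 2) * (r ^ N * ∫ x, |φ x| ^ N)) := by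
  set f := φ.rescale c hr
  have hf : ⇑f = fun x ↦ φ (r⁻¹ • (x - c)) := funext (φ.rescale_apply c hr)
  have hnum : ∫ x in Ω, ‖fderiv ℝ f x‖ ^ N = ∫ x, ‖fderiv ℝ φ x‖ ^ N := by
    rw [setIntegral_eq_integral_of_forall_compl_eq_zero fun x hx ↦ ?_, hf]
    · simpa using integral_norm_fderiv_pow_comp_inv_smul_sub volume φ c hr
    · rw [fderiv_of_notMem_tsupport ℝ (fun h ↦ hx (hK (f.tsupport_eq ▸ h))), norm_zero,
        zero_pow hN]
  have hden : ∫ x, |f x| ^ N = r ^ N * ∫ x, |φ x| ^ N := by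
    rw [hf]
    simpa using integral_comp_inv_smul_sub volume (fun y ↦ |φ y| ^ N) c hr.le
  rw [rayleighQuotient, hnum, ← hden]
  exact div_le_div_of_nonneg_left (integral_nonneg fun _ ↦ by positivity)
    (mul_pos (rpow_pos_of_pos hm _) (f.integral_abs_pow_pos volume hN))
    (f.rpow_mul_integral_abs_pow_le_setIntegral volume hΩ hK hρc hm.le (by positivity) hρm hN)

end RayleighQuotient

theorem exists_rayleighQuotient_le_of_blowup {N : ℕ} {ρ : EuclideanSpace ℝ (Fin N) → ℝ}
    (hρc : ContinuousOn ρ (unitBall N)) {xb : EuclideanSpace ℝ (Fin N)} (hxb : ‖xb‖ = 1)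
    (hblow : ∀ M : ℝ, 0 < M → ∃ δ : ℝ, 0 < δ ∧ ∀ x ∈ unitBall N, ‖x - xb‖ < δ →
      M ≤ (1 - ‖x‖ ^ 2) ^ 2 * ρ x / 4) :
    ∃ C : ℝ, ∀ M : ℝ, 0 < M → ∃ u, IsTest (unitBall N) u ∧ u ≠ 0 ∧
      rayleighQuotient (unitBall N) ρ u ≤ C / (M / 16) ^ ((N : ℝ) / 2) := by
  let φ : ContDiffBump (0 : EuclideanSpace ℝ (Fin N)) := ⟨1 / 2, 1, by norm_num, by norm_num⟩
  have hφ : φ.rOut = 1 := rfl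
  refine ⟨(∫ x, ‖fderiv ℝ φ x‖ ^ N) / ∫ x, |φ x| ^ N, fun M hM ↦ ?_⟩
  obtain ⟨δ, hδ, hζM⟩ := hblow M hM
  set r := min (δ / 5) (1 / 3)
  have hr : 0 < r := lt_min (by positivity) (by norm_num)
  have hrδ : 4 * r < δ := by linarith [min_le_left (δ / 5) (1 / 3)]
  set c := (1 - 3 * r) • xb
  have hK : closedBall c (r * φ.rOut) ⊆ unitBall N := by
    rw [hφ, mul_one]
    exact closedBall_smul_subset_ball_zero_one hxb hr (min_le_right _ _)
  have hρm : ∀ x ∈ closedBall c (r * φ.rOut), M / 16 / r ^ 2 ≤ ρ x := by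
    intro x hx
    have hxK := hK hx
    rw [hφ, mul_one] at hx
    have hx1 : ‖x‖ < 1 := mem_ball_zero_iff.mp hxK
    have hnear : ‖x - xb‖ ≤ 4 * r :=
      mem_closedBall_iff_norm.mp (closedBall_smul_subset_closedBall hxb hr.le hx)
    have hζMx := hζM x hxK (hnear.trans_lt hrδ)
    have hgap : 1 - ‖x‖ ^ 2 ≤ 8 * r := by linarith [one_sub_sq_norm_le hxb hx1.le]
    have hgap0 : 0 ≤ 1 - ‖x‖ ^ 2 := by nlinarith [norm_nonneg x]
    have hρx : 0 < ρ x := by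
      by_contra! h
      nlinarith [mul_nonpos_of_nonneg_of_nonpos (sq_nonneg (1 - ‖x‖ ^ 2)) h]
    rw [div_le_iff₀ (by positivity)]
    nlinarith [mul_le_mul_of_nonneg_right (pow_le_pow_left₀ hgap0 hgap 2) hρx.le]
  have hscale : (M / 16 / r ^ 2) ^ ((N : ℝ) / 2) * r ^ N = (M / 16) ^ ((N : ℝ) / 2) := by
    rw [div_rpow (by positivity) (by positivity), ← rpow_natCast_mul hr.le,
      show ((2 : ℕ) : ℝ) * (N / 2) = N by push_cast; ring, rpow_natCast,
      div_mul_cancel₀ _ (by positivity)]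
  refine ⟨φ.rescale c hr, ContDiffBump.isTest _ hK, ContDiffBump.coe_ne_zero _, ?_⟩
  calc rayleighQuotient (unitBall N) ρ (φ.rescale c hr)
      ≤ (∫ x, ‖fderiv ℝ φ x‖ ^ N) /
          ((M / 16 / r ^ 2) ^ ((N : ℝ) / 2) * (r ^ N * ∫ x, |φ x| ^ N)) :=
        rayleighQuotient_rescale_le (EuclideanSpace.pos_of_norm_eq_one hxb).ne' measurableSet_ball
          φ hr (by positivity) hK (hρc.mono hK) hρm
    _ = _ := by rw [← mul_assoc, hscale, div_mul_eq_div_div_swap]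

theorem exists_rayleighQuotient_lt_of_blowup {N : ℕ} {ρ : EuclideanSpace ℝ (Fin N) → ℝ}
    (hρc : ContinuousOn ρ (unitBall N)) {xb : EuclideanSpace ℝ (Fin N)} (hxb : ‖xb‖ = 1)
    (hblow : ∀ M : ℝ, 0 < M → ∃ δ : ℝ, 0 < δ ∧ ∀ x ∈ unitBall N, ‖x - xb‖ < δ →
      M ≤ (1 - ‖x‖ ^ 2) ^ 2 * ρ x / 4) {ε : ℝ} (hε : 0 < ε) :
    ∃ u, IsTest (unitBall N) u ∧ u ≠ 0 ∧ rayleighQuotient (unitBall N) ρ u < ε := by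
  obtain ⟨C, hC⟩ := exists_rayleighQuotient_le_of_blowup hρc hxb hblow
  have hN : (0 : ℝ) < N / 2 := by have := EuclideanSpace.pos_of_norm_eq_one hxb; positivity
  have hlim : Tendsto (fun M : ℝ ↦ C / (M / 16) ^ ((N : ℝ) / 2)) atTop (𝓝 0) :=
    tendsto_const_nhds.div_atTop
      ((tendsto_rpow_atTop hN).comp (tendsto_id.atTop_div_const (by norm_num)))
  obtain ⟨M, hMε, hM⟩ :=
    ((hlim.eventually (gt_mem_nhds hε)).and (eventually_gt_atTop 0)).exists
  obtain ⟨u, hu, hu0, hle⟩ := hC M hM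
  exact ⟨u, hu, hu0, hle.trans_lt hMε⟩

theorem poincare_constant_vanishes_of_blowup_general (N : ℕ)
    (ρ : EuclideanSpace ℝ (Fin N) → ℝ)
    (hρc : ContinuousOn ρ (unitBall N)) (hρpos : ∀ x ∈ unitBall N, 0 < ρ x)
    (xb : EuclideanSpace ℝ (Fin N)) (hxb : ‖xb‖ = 1)
    (hblow : ∀ M : ℝ, 0 < M → ∃ δ : ℝ, 0 < δ ∧ ∀ x ∈ unitBall N, ‖x - xb‖ < δ →
      M ≤ (1 - ‖x‖ ^ 2) ^ 2 * ρ x / 4) :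
    sInf {r : ℝ | ∃ u : EuclideanSpace ℝ (Fin N) → ℝ, IsTest (unitBall N) u ∧ u ≠ 0 ∧
      r = (∫ x in unitBall N, ‖fderiv ℝ u x‖ ^ N) /
        ∫ x in unitBall N, |u x| ^ N * ρ x ^ ((N : ℝ) / 2)} = 0 := by
  refine csInf_eq_of_forall_ge_of_forall_gt_exists_lt ?_ ?_ fun ε hε ↦ ?_
  · obtain ⟨u, hu, hu0, -⟩ := exists_rayleighQuotient_lt_of_blowup hρc hxb hblow one_pos
    exact ⟨_, u, hu, hu0, rfl⟩
  · rintro _ ⟨u, -, -, rfl⟩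
    exact rayleighQuotient_nonneg measurableSet_ball (fun x hx ↦ (hρpos x hx).le) u
  · obtain ⟨u, hu, hu0, hlt⟩ := exists_rayleighQuotient_lt_of_blowup hρc hxb hblow hε
    exact ⟨_, ⟨u, hu, hu0, rfl⟩, hlt⟩

/-- If the conformal factor `ζ(x) = (1-|x|²)² ρ(x)/4` of a conformal metric `g_ρ = ρ g_e`
on the unit ball tends to `+∞` at some boundary point `xb`, then the first Poincaré constant
`λ₁(B, g_ρ)` vanishes, i.e. the infimum of
`(∫_B |∇u|^N dx) / (∫_B |u|^N ρ^{N/2} dx)` over nonzero test functions is `0`. -/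
theorem poincare_constant_vanishes_of_blowup (N : ℕ) (hN : 2 ≤ N)
    (ρ : EuclideanSpace ℝ (Fin N) → ℝ)
    (hρc : ContinuousOn ρ (unitBall N)) (hρpos : ∀ x ∈ unitBall N, 0 < ρ x)
    (xb : EuclideanSpace ℝ (Fin N)) (hxb : ‖xb‖ = 1)
    (hblow : ∀ M : ℝ, 0 < M → ∃ δ : ℝ, 0 < δ ∧ ∀ x ∈ unitBall N, ‖x - xb‖ < δ →
      M ≤ (1 - ‖x‖ ^ 2) ^ 2 * ρ x / 4) :
    sInf {r : ℝ | ∃ u : EuclideanSpace ℝ (Fin N) → ℝ, IsTest (unitBall N) u ∧ u ≠ 0 ∧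
      r = (∫ x in unitBall N, ‖fderiv ℝ u x‖ ^ N) /
        ∫ x in unitBall N, |u x| ^ N * ρ x ^ ((N : ℝ) / 2)} = 0 :=
  poincare_constant_vanishes_of_blowup_general N ρ hρc hρpos xb hxb hblow
end

section
/- Let N ≥ 1, let B ⊂ ℝ^N be the open unit ball, and let a ∈ B. Define, for x with |a|²|x|² + 2⟨a,x⟩ + 1 ≠ 0, the Möbius map φ_a(x) := [ (1 − |a|²) x + (|x|² + 2⟨a,x⟩ + 1) a ] / ( |a|²|x|² + 2⟨a,x⟩ + 1 ). Then: (i) φ_a(0) = a; (ii) φ_a maps B bijectively onto B; (iii) for every R ∈ (0,1), the image φ_a(B_R(0)) equals the open ball of radius R(1 − |a|²)/(1 − R²|a|²) centered at the point ((1 − R²)/(1 − R²|a|²)) a. -/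
/-!
Write `D_a(x) = |a|²|x|² + 2⟨a,x⟩ + 1`, `c_R = ((1 - R²)/(1 - R²|a|²)) a` and
`ρ_R = R(1 - |a|²)/(1 - R²|a|²)`. Expanding the squares gives the single identity
`ρ_R² - |φ_a(x) - c_R|² = (1 - |a|²)² (R² - |x|²) / ((1 - R²|a|²) D_a(x))`,
and `D_a(x) ≥ (1 - |a||x|)² > 0` on the ball, so `φ_a(x) ∈ B_{ρ_R}(c_R)` exactly when `|x| < R`.
For `R = 1` this is `B_1(0)` itself. The same expansion gives `D_{-a}(φ_a(x)) = (1 - |a|²)²/D_a(x)`,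
from which `φ_{-a}` inverts `φ_a`; surjectivity onto `B_{ρ_R}(c_R)` then follows since that ball
lies in `B`.
-/

open scoped RealInnerProductSpace

section Mobius

variable {E : Type*} [NormedAddCommGroup E]

noncomputable def mobiusImageRadius (a : E) (R : ℝ) : ℝ := R * (1 - ‖a‖ ^ 2) / (1 - R ^ 2 * ‖a‖ ^ 2)

theorem mobiusImageRadius_one {a : E} (ha : ‖a‖ < 1) : mobiusImageRadius a 1 = 1 := by
  have hA : 1 - ‖a‖ ^ 2 ≠ 0 := (sub_pos.mpr (pow_lt_one₀ (norm_nonneg a) ha two_ne_zero)).ne'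
  simp [mobiusImageRadius, hA]

variable [InnerProductSpace ℝ E]

noncomputable def mobiusImageCenter (a : E) (R : ℝ) : E :=
  ((1 - R ^ 2) / (1 - R ^ 2 * ‖a‖ ^ 2)) • a

theorem mobiusImageCenter_one (a : E) : mobiusImageCenter a 1 = 0 := by
  simp [mobiusImageCenter]

noncomputable def mobiusDen (a x : E) : ℝ := ‖a‖ ^ 2 * ‖x‖ ^ 2 + 2 * ⟪a, x⟫ + 1

noncomputable def mobiusMap (a x : E) : E :=
  (mobiusDen a x)⁻¹ • ((1 - ‖a‖ ^ 2) • x + (‖x‖ ^ 2 + 2 * ⟪a, x⟫ + 1) • a)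

theorem mobiusDen_pos {a x : E} (h : ‖a‖ * ‖x‖ < 1) : 0 < mobiusDen a x := by
  have hinner : -(‖a‖ * ‖x‖) ≤ ⟪a, x⟫ := (abs_le.mp (abs_real_inner_le_norm a x)).1
  have hsq : 0 < (1 - ‖a‖ * ‖x‖) ^ 2 := by nlinarith
  unfold mobiusDen
  nlinarith

theorem mobiusMap_zero (a : E) : mobiusMap a 0 = a := by
  simp [mobiusMap, mobiusDen]

theorem inner_mobiusMap (a x : E) :
    ⟪a, mobiusMap a x⟫ =
      ((1 - ‖a‖ ^ 2) * ⟪a, x⟫ + ‖a‖ ^ 2 * (‖x‖ ^ 2 + 2 * ⟪a, x⟫ + 1)) / mobiusDen a x := by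
  rw [mobiusMap, real_inner_smul_right, inner_add_right, real_inner_smul_right,
    real_inner_smul_right, real_inner_self_eq_norm_sq]
  ring

theorem norm_mobiusMap_sq (a x : E) :
    ‖mobiusMap a x‖ ^ 2 =
      ((1 - ‖a‖ ^ 2) ^ 2 * ‖x‖ ^ 2
        + 2 * (1 - ‖a‖ ^ 2) * (‖x‖ ^ 2 + 2 * ⟪a, x⟫ + 1) * ⟪a, x⟫
        + ‖a‖ ^ 2 * (‖x‖ ^ 2 + 2 * ⟪a, x⟫ + 1) ^ 2) / mobiusDen a x ^ 2 := by
  rw [mobiusMap, norm_smul, mul_pow, norm_add_sq_real, real_inner_smul_left,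
    real_inner_smul_right, norm_smul, norm_smul, mul_pow, mul_pow, norm_inv, inv_pow,
    real_inner_comm x a]
  simp only [Real.norm_eq_abs, sq_abs]
  ring

theorem mobiusDen_neg_mobiusMap {a x : E} (hD : mobiusDen a x ≠ 0) :
    mobiusDen (-a) (mobiusMap a x) = (1 - ‖a‖ ^ 2) ^ 2 / mobiusDen a x := by
  rw [mobiusDen, norm_neg, inner_neg_left, norm_mobiusMap_sq, inner_mobiusMap]
  unfold mobiusDen at *
  field_simp
  ring

theorem mobiusMap_neg_mobiusMap {a x : E} (ha : ‖a‖ < 1) (hD : mobiusDen a x ≠ 0) :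
    mobiusMap (-a) (mobiusMap a x) = x := by
  have hA : 1 - ‖a‖ ^ 2 ≠ 0 := (sub_pos.mpr (pow_lt_one₀ (norm_nonneg a) ha two_ne_zero)).ne'
  have hcoef : ‖mobiusMap a x‖ ^ 2 + 2 * ⟪-a, mobiusMap a x⟫ + 1
      = (1 - ‖a‖ ^ 2) * (‖x‖ ^ 2 + 2 * ⟪a, x⟫ + 1) / mobiusDen a x := by
    rw [inner_neg_left, norm_mobiusMap_sq, inner_mobiusMap]
    unfold mobiusDen at *
    field_simp
    ring
  rw [mobiusMap, mobiusDen_neg_mobiusMap hD, hcoef, norm_neg, mobiusMap]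
  match_scalars <;> field_simp; ring

theorem mobiusImageRadius_sq_sub_dist_sq {a x : E} {R : ℝ} (hR : 1 - R ^ 2 * ‖a‖ ^ 2 ≠ 0)
    (hD : mobiusDen a x ≠ 0) :
    mobiusImageRadius a R ^ 2 - dist (mobiusMap a x) (mobiusImageCenter a R) ^ 2
      = (1 - ‖a‖ ^ 2) ^ 2 * (R ^ 2 - ‖x‖ ^ 2) / ((1 - R ^ 2 * ‖a‖ ^ 2) * mobiusDen a x) := by
  rw [mobiusImageRadius, mobiusImageCenter, dist_eq_norm, norm_sub_sq_real,
    real_inner_smul_right, real_inner_comm, inner_mobiusMap, norm_mobiusMap_sq, norm_smul, mul_pow,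
    Real.norm_eq_abs, sq_abs]
  unfold mobiusDen at *
  field_simp
  ring

theorem mobiusMap_mem_ball_iff {a x : E} {R : ℝ} (ha : ‖a‖ < 1) (hx : ‖a‖ * ‖x‖ < 1)
    (hR : 0 < R) (hRa : R * ‖a‖ < 1) :
    mobiusMap a x ∈ Metric.ball (mobiusImageCenter a R) (mobiusImageRadius a R) ↔ ‖x‖ < R := by
  have hA : 0 < 1 - ‖a‖ ^ 2 := by nlinarith [norm_nonneg a]
  have hRA : 0 < 1 - R ^ 2 * ‖a‖ ^ 2 := by nlinarith [mul_nonneg hR.le (norm_nonneg a)]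
  have hD := mobiusDen_pos hx
  have hρ : 0 ≤ mobiusImageRadius a R := (div_pos (mul_pos hR hA) hRA).le
  have key := mobiusImageRadius_sq_sub_dist_sq hRA.ne' hD.ne'
  rw [Metric.mem_ball, ← sq_lt_sq₀ dist_nonneg hρ, ← sq_lt_sq₀ (norm_nonneg x) hR.le,
    ← sub_pos, key, div_pos_iff_of_pos_right (mul_pos hRA hD),
    mul_pos_iff_of_pos_left (pow_pos hA 2), sub_pos]

theorem mapsTo_mobiusMap_ball {a : E} (ha : ‖a‖ < 1) :
    Set.MapsTo (mobiusMap a) (Metric.ball 0 1) (Metric.ball 0 1) := by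
  intro x hx
  have hx' : ‖x‖ < 1 := mem_ball_zero_iff.mp hx
  have h := (mobiusMap_mem_ball_iff ha
    (mul_lt_one_of_nonneg_of_lt_one_left (norm_nonneg a) ha hx'.le) one_pos
    (by rwa [one_mul])).mpr hx'
  rwa [mobiusImageCenter_one, mobiusImageRadius_one ha] at h

theorem invOn_mobiusMap_neg_ball {a : E} (ha : ‖a‖ < 1) :
    Set.InvOn (mobiusMap (-a)) (mobiusMap a) (Metric.ball 0 1) (Metric.ball 0 1) := by
  have hinv {b : E} (hb : ‖b‖ < 1) :
      Set.LeftInvOn (mobiusMap (-b)) (mobiusMap b) (Metric.ball 0 1) :=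
    fun x hx ↦ mobiusMap_neg_mobiusMap hb (mobiusDen_pos
      (mul_lt_one_of_nonneg_of_lt_one_left (norm_nonneg b) hb (mem_ball_zero_iff.mp hx).le)).ne'
  refine ⟨hinv ha, ?_⟩
  simpa using hinv (b := -a) (by rwa [norm_neg])

theorem bijOn_mobiusMap_ball {a : E} (ha : ‖a‖ < 1) :
    Set.BijOn (mobiusMap a) (Metric.ball 0 1) (Metric.ball 0 1) :=
  (invOn_mobiusMap_neg_ball ha).bijOn (mapsTo_mobiusMap_ball ha)
    (mapsTo_mobiusMap_ball (by rwa [norm_neg]))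

theorem ball_mobiusImage_subset_ball {a : E} {R : ℝ} (ha : ‖a‖ < 1) (hR : 0 ≤ R) (hR1 : R ≤ 1) :
    Metric.ball (mobiusImageCenter a R) (mobiusImageRadius a R) ⊆ Metric.ball 0 1 := by
  have hRA : 0 < 1 - R ^ 2 * ‖a‖ ^ 2 := by nlinarith [norm_nonneg a, pow_le_one₀ (n := 2) hR hR1]
  apply Metric.ball_subset_ball'
  rw [dist_zero_right, mobiusImageCenter, norm_smul, Real.norm_of_nonneg
    (div_nonneg (by nlinarith) hRA.le), mobiusImageRadius, div_mul_eq_mul_div, ← add_div,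
    div_le_one hRA]
  -- `1 - R²‖a‖² - (R(1 - ‖a‖²) + (1 - R²)‖a‖) = (1 - R)(1 - ‖a‖)(1 - R‖a‖)`
  nlinarith [mul_nonneg (mul_nonneg (sub_nonneg.mpr hR1) (sub_nonneg.mpr ha.le))
    (sub_nonneg.mpr (mul_le_one₀ hR1 (norm_nonneg a) ha.le))]

theorem image_mobiusMap_ball {a : E} {R : ℝ} (ha : ‖a‖ < 1) (hR : 0 < R) (hR1 : R ≤ 1) :
    mobiusMap a '' Metric.ball 0 R =
      Metric.ball (mobiusImageCenter a R) (mobiusImageRadius a R) := by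
  have hRa : R * ‖a‖ < 1 := mul_lt_one_of_nonneg_of_lt_one_right hR1 (norm_nonneg a) ha
  have hmem {x : E} (hx : x ∈ Metric.ball 0 1) := mobiusMap_mem_ball_iff ha
    (mul_lt_one_of_nonneg_of_lt_one_left (norm_nonneg a) ha (mem_ball_zero_iff.mp hx).le) hR hRa
  ext y
  constructor
  · rintro ⟨x, hx, rfl⟩
    have hx' : ‖x‖ < R := mem_ball_zero_iff.mp hx
    exact (hmem (mem_ball_zero_iff.mpr (hx'.trans_le hR1))).mpr hx'
  · intro hy
    have hy1 := ball_mobiusImage_subset_ball ha hR.le hR1 hy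
    have hinv := (invOn_mobiusMap_neg_ball ha).2 hy1
    have hx1 := mapsTo_mobiusMap_ball (a := -a) (by rwa [norm_neg]) hy1
    exact ⟨_, mem_ball_zero_iff.mpr ((hmem hx1).mp (by rwa [hinv])), hinv⟩

end Mobius

theorem mobius_map_properties_general (N : ℕ)
    (a : EuclideanSpace ℝ (Fin N)) (ha : a ∈ Metric.ball (0 : EuclideanSpace ℝ (Fin N)) 1)
    (φ : EuclideanSpace ℝ (Fin N) → EuclideanSpace ℝ (Fin N))
    (hφ : ∀ x : EuclideanSpace ℝ (Fin N),
      φ x = (‖a‖ ^ 2 * ‖x‖ ^ 2 + 2 * (inner ℝ a x : ℝ) + 1)⁻¹ •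
        ((1 - ‖a‖ ^ 2) • x + (‖x‖ ^ 2 + 2 * (inner ℝ a x : ℝ) + 1) • a)) :
    φ 0 = a ∧
    Set.BijOn φ (Metric.ball 0 1) (Metric.ball 0 1) ∧
    ∀ R : ℝ, 0 < R → R < 1 →
      φ '' Metric.ball 0 R =
        Metric.ball (((1 - R ^ 2) / (1 - R ^ 2 * ‖a‖ ^ 2)) • a)
          (R * (1 - ‖a‖ ^ 2) / (1 - R ^ 2 * ‖a‖ ^ 2)) := by
  have ha' : ‖a‖ < 1 := mem_ball_zero_iff.mp ha
  obtain rfl : φ = mobiusMap a := funext hφ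
  exact ⟨mobiusMap_zero a, bijOn_mobiusMap_ball ha',
    fun R hR hR1 ↦ image_mobiusMap_ball ha' hR hR1.le⟩

/-- Properties of the Möbius maps
`φ_a(x) = [(1-|a|²)x + (|x|² + 2⟨a,x⟩ + 1)a] / (|a|²|x|² + 2⟨a,x⟩ + 1)` of the unit ball
`B ⊂ ℝ^N`: `φ_a(0) = a`; `φ_a` maps `B` bijectively onto `B`; and for `R ∈ (0,1)`,
`φ_a(B_R(0))` is the ball of radius `R(1-|a|²)/(1-R²|a|²)` centered at
`((1-R²)/(1-R²|a|²)) a`. -/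
theorem mobius_map_properties (N : ℕ) (hN : 1 ≤ N)
    (a : EuclideanSpace ℝ (Fin N)) (ha : a ∈ Metric.ball (0 : EuclideanSpace ℝ (Fin N)) 1)
    (φ : EuclideanSpace ℝ (Fin N) → EuclideanSpace ℝ (Fin N))
    (hφ : ∀ x : EuclideanSpace ℝ (Fin N),
      φ x = (‖a‖ ^ 2 * ‖x‖ ^ 2 + 2 * (inner ℝ a x : ℝ) + 1)⁻¹ •
        ((1 - ‖a‖ ^ 2) • x + (‖x‖ ^ 2 + 2 * (inner ℝ a x : ℝ) + 1) • a)) :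
    φ 0 = a ∧
    Set.BijOn φ (Metric.ball 0 1) (Metric.ball 0 1) ∧
    ∀ R : ℝ, 0 < R → R < 1 →
      φ '' Metric.ball 0 R =
        Metric.ball (((1 - R ^ 2) / (1 - R ^ 2 * ‖a‖ ^ 2)) • a)
          (R * (1 - ‖a‖ ^ 2) / (1 - R ^ 2 * ‖a‖ ^ 2)) :=
  mobius_map_properties_general N a ha φ hφ
end
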